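/- arXiv:2409.07026 — 5 statements merged into one kernel-verified Lean document; each statement's English description precedes it below -/
import Mathlib

section
/- Let (𝒜, ℬ, 𝒞) be a recollement of abelian categories and let 𝒴 be a wakamatsu tilting subcategory of ℬ. If i^! is exact, i_* i^!(⊥𝒴) ⊆ 𝒴, and j_* j^*(𝒴) ⊆ 𝒴, then i^!(𝒴) and j^*(𝒴) are wakamatsu tilting subcategories of 𝒜 and 𝒞, respectively. -/
open CategoryTheory Limits Abelian

universe w₁ w₂ w₃ v₁ v₂ v₃ u₁ u₂ u₃

/-- A recollement of abelian categories. Exactness conditions on the six functors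
(`i_*`, `j^*` exact; `i^*`, `j_!` right exact; `i^!`, `j_*` left exact) are automatic
from the adjunctions. -/
structure Recollement (𝒜 : Type u₁) (ℬ : Type u₂) (𝒞 : Type u₃)
    [Category.{v₁} 𝒜] [Category.{v₂} ℬ] [Category.{v₃} 𝒞]
    [Abelian 𝒜] [Abelian ℬ] [Abelian 𝒞] where
  /-- `i_* : 𝒜 ⥤ ℬ` -/
  iStar : 𝒜 ⥤ ℬ
  /-- `i^* : ℬ ⥤ 𝒜` -/
  iUS : ℬ ⥤ 𝒜
  /-- `i^! : ℬ ⥤ 𝒜` -/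
  iUE : ℬ ⥤ 𝒜
  /-- `j^* : ℬ ⥤ 𝒞` -/
  jUS : ℬ ⥤ 𝒞
  /-- `j_! : 𝒞 ⥤ ℬ` -/
  jLE : 𝒞 ⥤ ℬ
  /-- `j_* : 𝒞 ⥤ ℬ` -/
  jLS : 𝒞 ⥤ ℬ
  /-- the adjunction `(i^*, i_*)` -/
  adj₁ : iUS ⊣ iStar
  /-- the adjunction `(i_*, i^!)` -/
  adj₂ : iStar ⊣ iUE
  /-- the adjunction `(j_!, j^*)` -/
  adj₃ : jLE ⊣ jUS
  /-- the adjunction `(j^*, j_*)` -/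
  adj₄ : jUS ⊣ jLS
  iStar_full : iStar.Full
  iStar_faithful : iStar.Faithful
  jLE_full : jLE.Full
  jLE_faithful : jLE.Faithful
  jLS_full : jLS.Full
  jLS_faithful : jLS.Faithful
  /-- `Im i_* = Ker j^*` -/
  essImage_iStar : ∀ X : ℬ, iStar.essImage X ↔ IsZero (jUS.obj X)

variable {𝒟 : Type u₁} [Category.{v₁} 𝒟] [Abelian 𝒟]

/-- a subcategory (given by a set of objects) closed under isomorphisms and (finite) direct
sums. -/
def IsGoodSubcat (S : Set 𝒟) : Prop :=
  (∀ ⦃X Y : 𝒟⦄, (X ≅ Y) → X ∈ S → Y ∈ S) ∧ ∀ X Y : 𝒟, X ∈ S → Y ∈ S → (X ⊞ Y) ∈ S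

/-- exactness at `Y` of `X ⟶ Y ⟶ Z`. -/
def ExactAt {X Y Z : 𝒟} (f : X ⟶ Y) (g : Y ⟶ Z) : Prop :=
  ∃ w : f ≫ g = 0, (ShortComplex.mk f g w).Exact

section Ext
variable [HasExt.{w₁} 𝒟]

/-- `⊥S`: objects `M` with `Ext^i(M, N) = 0` for all `i ≥ 1`, `N ∈ S`. -/
def leftPerp (S : Set 𝒟) : Set 𝒟 :=
  {M | ∀ N ∈ S, ∀ i : ℕ, 1 ≤ i → Subsingleton (Ext M N i)}

/-- a self-orthogonal subcategory. -/
def SelfOrthogonal (S : Set 𝒟) : Prop :=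
  ∀ M ∈ S, ∀ N ∈ S, ∀ i : ℕ, 1 ≤ i → Subsingleton (Ext M N i)

/-- The subcategory `X_S` : objects `M ∈ ⊥S` admitting an exact sequence
`0 ⟶ M ⟶ W 0 ⟶ W 1 ⟶ ⋯` with all `W i ∈ S` and images of differentials in `⊥S`. -/
def wakClass (S : Set 𝒟) : Set 𝒟 :=
  {M | M ∈ leftPerp S ∧ ∃ (W : ℕ → 𝒟) (f : M ⟶ W 0) (d : ∀ n, W n ⟶ W (n + 1)),
    (∀ n, W n ∈ S) ∧ Mono f ∧ ExactAt f (d 0) ∧ (∀ n, ExactAt (d n) (d (n + 1))) ∧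
    (∀ n, image (d n) ∈ leftPerp S)}

/-- a wakamatsu tilting subcategory. -/
def WakamatsuTilting (S : Set 𝒟) : Prop :=
  SelfOrthogonal S ∧ ∀ P : 𝒟, Projective P → P ∈ wakClass S

end Ext

/-- `Fac S`. -/
def Fac (S : Set 𝒟) : Set 𝒟 :=
  {X | ∃ M ∈ S, ∃ f : M ⟶ X, Epi f}

/-- `f : A ⟶ M` is a left `S`-approximation of `A`. -/
def IsLeftApprox (S : Set 𝒟) {A M : 𝒟} (f : A ⟶ M) : Prop :=
  M ∈ S ∧ ∀ M' ∈ S, ∀ g : A ⟶ M', ∃ h : M ⟶ M', f ≫ h = g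

/-- `f : M ⟶ A` is a right `S`-approximation of `A`. -/
def IsRightApprox (S : Set 𝒟) {M A : 𝒟} (f : M ⟶ A) : Prop :=
  M ∈ S ∧ ∀ M' ∈ S, ∀ g : M' ⟶ A, ∃ h : M' ⟶ M, h ≫ f = g

/-- a contravariantly finite subcategory. -/
def ContravariantlyFinite (S : Set 𝒟) : Prop :=
  ∀ A : 𝒟, ∃ (M : 𝒟) (f : M ⟶ A), IsRightApprox S f

section Ext
variable [HasExt.{w₁} 𝒟]

/-- a weak support τ-tilting subcategory. -/
def WeakSupportTauTilting (S : Set 𝒟) : Prop :=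
  (∀ M ∈ S, ∀ L ∈ Fac S, Subsingleton (Ext M L 1)) ∧
  ∀ P : 𝒟, Projective P → ∃ (M₀ M₁ : 𝒟) (f : P ⟶ M₀) (g : M₀ ⟶ M₁),
    M₀ ∈ S ∧ M₁ ∈ S ∧ Epi g ∧ ExactAt f g ∧ IsLeftApprox S f

/-- a support τ-tilting subcategory. -/
def SupportTauTilting (S : Set 𝒟) : Prop :=
  WeakSupportTauTilting S ∧ ContravariantlyFinite S

/-- `^⊥₁ S`. -/
def perpOneLeft (S : Set 𝒟) : Set 𝒟 :=
  {A | ∀ M ∈ S, Subsingleton (Ext A M 1)}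

end Ext

/-- `S^⊥₀`. -/
def perpZeroRight (S : Set 𝒟) : Set 𝒟 :=
  {A | ∀ M ∈ S, ∀ f : M ⟶ A, f = 0}

/-- a torsion pair. -/
def TorsionPair (T F : Set 𝒟) : Prop :=
  (∀ X ∈ T, ∀ Y ∈ F, ∀ f : X ⟶ Y, f = 0) ∧
  ∀ B : 𝒟, ∃ (X Y : 𝒟) (f : X ⟶ B) (g : B ⟶ Y),
    X ∈ T ∧ Y ∈ F ∧ Mono f ∧ Epi g ∧ ExactAt f g

/-- a τ-cotorsion torsion triple. -/
def TauCotorsionTorsionTriple [HasExt.{w₁} 𝒟] (L D F : Set 𝒟) : Prop :=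
  L = perpOneLeft D ∧
  (∀ P : 𝒟, Projective P → ∃ (D₀ C₀ : 𝒟) (f : P ⟶ D₀) (g : D₀ ⟶ C₀),
    D₀ ∈ L ∩ D ∧ C₀ ∈ L ∧ Epi g ∧ ExactAt f g ∧ IsLeftApprox D f) ∧
  ContravariantlyFinite (L ∩ D) ∧ TorsionPair D F

/-- the closure under isomorphism of the image of a subcategory under a functor. -/
def imgCl {𝒟' : Type u₂} [Category.{v₂} 𝒟'] (F : 𝒟 ⥤ 𝒟') (S : Set 𝒟) : Set 𝒟' :=
  {X | ∃ Y ∈ S, Nonempty (F.obj Y ≅ X)}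

/-! For an adjunction `F ⊣ G` of exact functors between abelian categories, the induced
adjunction on derived categories gives `Ext^n(F X, Y) ≃ Ext^n(X, G Y)`. Applied to
`i_* ⊣ i^!` and `j^* ⊣ j_*` (the latter pair is exact because `i^!` is), this turns
`Ext^n(i^! B, i^! Z)` into `Ext^n(i_* i^! B, Z)` and `Ext^n(j^* B, j^* Z)` into
`Ext^n(B, j_* j^* Z)`, which vanish for `B ∈ ⊥𝒴`, `Z ∈ 𝒴`, `n ≥ 1` by the two hypotheses.

With this vanishing, an exact functor `Φ` sends `⊥𝒴` into `⊥Φ(𝒴)` and the coresolutions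
defining `X_𝒴` to coresolutions defining `X_Φ(𝒴)`. If moreover `Φ` has a fully faithful
left adjoint `Ψ`, every projective `P` is isomorphic to `Φ (Ψ P)` with `Ψ P` projective,
so `Φ(𝒴)` is wakamatsu tilting; this applies to `Φ = i^!, Ψ = i_*` and `Φ = j^*, Ψ = j_!`. -/

namespace CategoryTheory

def Adjunction.mapHomologicalComplex {C D ι : Type*} [Category* C] [Category* D]
    [HasZeroMorphisms C] [HasZeroMorphisms D] {F : C ⥤ D} {G : D ⥤ C} (adj : F ⊣ G)
    [F.PreservesZeroMorphisms] [G.PreservesZeroMorphisms] (c : ComplexShape ι) :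
    F.mapHomologicalComplex c ⊣ G.mapHomologicalComplex c :=
  Adjunction.mkOfUnitCounit
    { unit :=
        { app := fun K =>
            { f := fun i => adj.unit.app (K.X i)
              comm' := fun i j _ => (adj.unit.naturality (K.d i j)).symm }
          naturality := fun K L φ => by ext i; exact adj.unit.naturality (φ.f i) }
      counit :=
        { app := fun K =>
            { f := fun i => adj.counit.app (K.X i)
              comm' := fun i j _ => (adj.counit.naturality (K.d i j)).symm }
          naturality := fun K L φ => by ext i; exact adj.counit.naturality (φ.f i) }
      left_triangle := by ext K i; simp [Functor.mapHomologicalComplex]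
      right_triangle := by ext K i; simp [Functor.mapHomologicalComplex] }

variable {C : Type u₁} [Category.{v₁} C] [Abelian C] {D : Type u₂} [Category.{v₂} D] [Abelian D]

lemma Abelian.Ext.subsingleton_of_iso [HasExt.{w₁} C] {X X' Y Y' : C} (e : X ≅ X')
    (e' : Y ≅ Y') {n : ℕ} [Subsingleton (Ext X Y n)] : Subsingleton (Ext X' Y' n) :=
  (((extFunctor n).mapIso e.op).app Y' ≪≫
    ((extFunctor n).obj (Opposite.op X)).mapIso e'.symm).addCommGroupIsoToAddEquiv.toEquiv
    |>.subsingleton_congr.mpr ‹_›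

section ExactAdjunction

variable {F : C ⥤ D} {G : D ⥤ C} (adj : F ⊣ G) [F.Additive] [G.Additive]
  [PreservesFiniteLimits F] [PreservesFiniteColimits F]
  [PreservesFiniteLimits G] [PreservesFiniteColimits G]

noncomputable instance [HasDerivedCategory.{w₁} C] [HasDerivedCategory.{w₂} D] :
    CatCommSq (F.mapHomologicalComplex (ComplexShape.up ℤ))
      DerivedCategory.Q DerivedCategory.Q F.mapDerivedCategory :=
  ⟨F.mapDerivedCategoryFactors.symm⟩

noncomputable def Adjunction.mapDerivedCategory [HasDerivedCategory.{w₁} C]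
    [HasDerivedCategory.{w₂} D] : F.mapDerivedCategory ⊣ G.mapDerivedCategory :=
  (adj.mapHomologicalComplex _).localization DerivedCategory.Q
    (HomologicalComplex.quasiIso C _) DerivedCategory.Q (HomologicalComplex.quasiIso D _) _ _

noncomputable def Adjunction.extEquiv [HasExt.{w₁} C] [HasExt.{w₂} D] (X : C) (Y : D) (n : ℕ) :
    Ext (F.obj X) Y n ≃ Ext X (G.obj Y) n :=
  letI := HasDerivedCategory.standard C
  letI := HasDerivedCategory.standard D
  Ext.homEquiv.trans <|
    ((F.mapDerivedCategorySingleFunctor 0).app X).symm.homFromEquiv.trans <|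
    (adj.mapDerivedCategory.homEquiv _ _).trans <|
    ((G.mapDerivedCategory.commShiftIso (n : ℤ)).app _).homToEquiv.trans <|
    ((shiftFunctor _ (n : ℤ)).mapIso
      ((G.mapDerivedCategorySingleFunctor 0).app Y)).homToEquiv.trans Ext.homEquiv.symm

end ExactAdjunction

end CategoryTheory

section WakamatsuTilting

variable {C : Type u₁} [Category.{v₁} C] [Abelian C] {D : Type u₂} [Category.{v₂} D] [Abelian D]

lemma ExactAt.map {X Y Z : C} {f : X ⟶ Y} {g : Y ⟶ Z} (h : ExactAt f g) (F : C ⥤ D)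
    [F.PreservesZeroMorphisms] [F.PreservesHomology] : ExactAt (F.map f) (F.map g) :=
  let ⟨w, hw⟩ := h
  ⟨by rw [← F.map_comp, w, F.map_zero], hw.map F⟩

lemma ExactAt.iso_hom_comp {X X' Y Z : C} {f : X ⟶ Y} {g : Y ⟶ Z} (h : ExactAt f g)
    (e : X' ≅ X) : ExactAt (e.hom ≫ f) g :=
  let ⟨w, hw⟩ := h
  have w' : (e.hom ≫ f) ≫ g = 0 := by rw [Category.assoc, w, comp_zero]
  ⟨w', ShortComplex.exact_of_iso (S₂ := ShortComplex.mk _ _ w')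
    (ShortComplex.isoMk e.symm (Iso.refl Y) (Iso.refl Z)) hw⟩

variable [HasExt.{w₁} C]

lemma mem_leftPerp_of_iso {S : Set C} {M M' : C} (e : M ≅ M') (hM : M ∈ leftPerp S) :
    M' ∈ leftPerp S := fun N hN i hi =>
  have := hM N hN i hi
  Abelian.Ext.subsingleton_of_iso e (Iso.refl N)

lemma mem_wakClass_of_iso {S : Set C} {M M' : C} (e : M' ≅ M) (hM : M ∈ wakClass S) :
    M' ∈ wakClass S := by
  obtain ⟨hperp, W, f, d, hW, hf, hex₀, hex, him⟩ := hM
  exact ⟨mem_leftPerp_of_iso e.symm hperp, W, e.hom ≫ f, d, hW, mono_comp _ _,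
    hex₀.iso_hom_comp e, hex, him⟩

variable [HasExt.{w₂} D] {Φ : C ⥤ D} {𝒴 : Set C}
  (hΦ : ∀ B ∈ leftPerp 𝒴, ∀ Z ∈ 𝒴, ∀ i, 1 ≤ i → Subsingleton (Ext (Φ.obj B) (Φ.obj Z) i))
include hΦ

lemma map_mem_leftPerp_imgCl {B : C} (hB : B ∈ leftPerp 𝒴) :
    Φ.obj B ∈ leftPerp (imgCl Φ 𝒴) := by
  rintro N ⟨Z, hZ, ⟨e⟩⟩ i hi
  have := hΦ B hB Z hZ i hi
  exact Abelian.Ext.subsingleton_of_iso (Iso.refl _) e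

lemma map_mem_wakClass_imgCl [PreservesFiniteLimits Φ] [PreservesFiniteColimits Φ] {M : C}
    (hM : M ∈ wakClass 𝒴) : Φ.obj M ∈ wakClass (imgCl Φ 𝒴) := by
  have : Φ.PreservesHomology := Φ.preservesHomologyOfExact
  obtain ⟨hperp, W, f, d, hW, hf, hex₀, hex, him⟩ := hM
  refine ⟨map_mem_leftPerp_imgCl hΦ hperp, fun n => Φ.obj (W n), Φ.map f,
    fun n => Φ.map (d n), fun n => ⟨W n, hW n, ⟨Iso.refl _⟩⟩, inferInstance, hex₀.map Φ,
    fun n => (hex n).map Φ, fun n => ?_⟩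
  exact mem_leftPerp_of_iso (CategoryTheory.PreservesImage.iso Φ (d n)).symm
    (map_mem_leftPerp_imgCl hΦ (him n))

lemma WakamatsuTilting.imgCl (hwt : WakamatsuTilting 𝒴) {Ψ : D ⥤ C} (adj : Ψ ⊣ Φ)
    [Ψ.Full] [Ψ.Faithful] [PreservesFiniteLimits Φ] [PreservesFiniteColimits Φ] :
    WakamatsuTilting (imgCl Φ 𝒴) := by
  refine ⟨?_, fun P hP => ?_⟩
  · rintro M ⟨Z, hZ, ⟨e⟩⟩
    exact mem_leftPerp_of_iso e (map_mem_leftPerp_imgCl hΦ (hwt.1 Z hZ))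
  · exact mem_wakClass_of_iso (asIso (adj.unit.app P))
      (map_mem_wakClass_imgCl hΦ (hwt.2 _ (adj.map_projective P hP)))

end WakamatsuTilting

namespace Recollement

variable {𝒜 : Type u₁} {ℬ : Type u₂} {𝒞 : Type u₃}
  [Category.{v₁} 𝒜] [Category.{v₂} ℬ] [Category.{v₃} 𝒞]
  [Abelian 𝒜] [Abelian ℬ] [Abelian 𝒞] (R : Recollement 𝒜 ℬ 𝒞)

attribute [instance] iStar_full iStar_faithful jLE_full jLE_faithful jLS_full jLS_faithful

instance : R.iStar.IsLeftAdjoint := R.adj₂.isLeftAdjoint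
instance : R.iStar.IsRightAdjoint := R.adj₁.isRightAdjoint
instance : R.iUE.IsRightAdjoint := R.adj₂.isRightAdjoint
instance : R.jUS.IsLeftAdjoint := R.adj₄.isLeftAdjoint
instance : R.jUS.IsRightAdjoint := R.adj₃.isRightAdjoint
instance : R.jLE.IsLeftAdjoint := R.adj₃.isLeftAdjoint
instance : R.jLS.IsRightAdjoint := R.adj₄.isRightAdjoint

instance : R.iStar.Additive := Functor.additive_of_preserves_binary_products _
instance : R.iUE.Additive := Functor.additive_of_preserves_binary_products _
instance : R.jUS.Additive := Functor.additive_of_preserves_binary_products _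
instance : R.jLS.Additive := Functor.additive_of_preserves_binary_products _

lemma isZero_iUE_obj_jLS_obj (X : 𝒞) : IsZero (R.iUE.obj (R.jLS.obj X)) := by
  -- `End(i^! j_* X) ≃ Hom(j^* i_* (i^! j_* X), X)`, and `j^* i_* = 0`.
  rw [IsZero.iff_id_eq_zero]
  have hz : IsZero (R.jUS.obj (R.iStar.obj (R.iUE.obj (R.jLS.obj X)))) :=
    (R.essImage_iStar _).mp (R.iStar.obj_mem_essImage _)
  apply (R.adj₂.homEquiv _ _).symm.injective
  apply (R.adj₄.homEquiv _ _).symm.injective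
  exact hz.eq_of_src _ _

lemma isZero_of_isZero_jUS_of_isZero_iUE {X : ℬ} (h₁ : IsZero (R.jUS.obj X))
    (h₂ : IsZero (R.iUE.obj X)) : IsZero X := by
  obtain ⟨A, ⟨e⟩⟩ := (R.essImage_iStar X).mpr h₁
  have hA : IsZero A := h₂.of_iso (asIso (R.adj₂.unit.app A) ≪≫ R.iUE.mapIso e)
  exact (R.iStar.map_isZero hA).of_iso e.symm

lemma epi_jLS_map [PreservesFiniteColimits R.iUE] {X Y : 𝒞} (g : X ⟶ Y) [Epi g] :
    Epi (R.jLS.map g) := by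
  -- The cokernel of `j_* g` is killed by `j^*`, since `j^* j_* ≅ 𝟭`, and by the right exact
  -- functor `i^!`, since `i^! j_* = 0`; hence it is zero.
  have : Epi (R.jUS.map (R.jLS.map g)) := by
    rw [← epi_comp_iff_of_isIso _ (R.adj₄.counit.app Y)]
    have := R.adj₄.counit.naturality g
    dsimp at this
    rw [this]
    infer_instance
  refine Preadditive.epi_of_isZero_cokernel _ (R.isZero_of_isZero_jUS_of_isZero_iUE ?_ ?_)
  · exact (isZero_cokernel_of_epi _).of_iso (PreservesCokernel.iso R.jUS _)
  · exact (IsZero.of_epi (cokernel.π _) (R.isZero_iUE_obj_jLS_obj Y)).of_iso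
      (PreservesCokernel.iso R.iUE _)

lemma preservesFiniteColimits_jLS [PreservesFiniteColimits R.iUE] :
    PreservesFiniteColimits R.jLS :=
  have : R.jLS.PreservesEpimorphisms := ⟨fun g _ => R.epi_jLS_map g⟩
  have := Functor.preservesHomology_of_preservesEpis_and_kernels R.jLS
  R.jLS.preservesFiniteColimits_of_preservesHomology

end Recollement

theorem stmt_2_general
    {𝒜 : Type u₁} {ℬ : Type u₂} {𝒞 : Type u₃}
    [Category.{v₁} 𝒜] [Category.{v₂} ℬ] [Category.{v₃} 𝒞]
    [Abelian 𝒜] [Abelian ℬ] [Abelian 𝒞]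
    [HasExt.{w₁} 𝒜] [HasExt.{w₂} ℬ] [HasExt.{w₃} 𝒞]
    (R : Recollement 𝒜 ℬ 𝒞)
    (𝒴 : Set ℬ)
    (hwt : WakamatsuTilting 𝒴)
    [PreservesFiniteColimits R.iUE]
    (h₁ : ∀ Y ∈ leftPerp 𝒴, R.iStar.obj (R.iUE.obj Y) ∈ 𝒴)
    (h₂ : ∀ Y ∈ 𝒴, R.jLS.obj (R.jUS.obj Y) ∈ 𝒴) :
    WakamatsuTilting (imgCl R.iUE 𝒴) ∧ WakamatsuTilting (imgCl R.jUS 𝒴) := by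
  have := R.preservesFiniteColimits_jLS
  constructor
  · refine hwt.imgCl (fun B hB Z hZ i hi => ?_) R.adj₂
    have := hwt.1 _ (h₁ B hB) Z hZ i hi
    exact (R.adj₂.extEquiv (R.iUE.obj B) Z i).symm.subsingleton
  · refine hwt.imgCl (fun B hB Z hZ i hi => ?_) R.adj₃
    have := hB _ (h₂ Z hZ) i hi
    exact (R.adj₄.extEquiv B (R.jUS.obj Z) i).subsingleton

/-- If `𝒴` is a wakamatsu tilting subcategory of `ℬ`, `i^!` is exact, `i_* i^!(⊥𝒴) ⊆ 𝒴` and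
`j_* j^*(𝒴) ⊆ 𝒴`, then `i^!(𝒴)` and `j^*(𝒴)` are wakamatsu tilting subcategories of
`𝒜` and `𝒞` respectively. -/
theorem stmt_2
    {𝒜 : Type u₁} {ℬ : Type u₂} {𝒞 : Type u₃}
    [Category.{v₁} 𝒜] [Category.{v₂} ℬ] [Category.{v₃} 𝒞]
    [Abelian 𝒜] [Abelian ℬ] [Abelian 𝒞]
    [EnoughProjectives 𝒜] [EnoughInjectives 𝒜]
    [EnoughProjectives ℬ] [EnoughInjectives ℬ]
    [EnoughProjectives 𝒞] [EnoughInjectives 𝒞]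
    [HasExt.{w₁} 𝒜] [HasExt.{w₂} ℬ] [HasExt.{w₃} 𝒞]
    (R : Recollement 𝒜 ℬ 𝒞)
    (𝒴 : Set ℬ) (good : IsGoodSubcat 𝒴)
    (hwt : WakamatsuTilting 𝒴)
    [PreservesFiniteLimits R.iUE] [PreservesFiniteColimits R.iUE]
    (h₁ : ∀ Y ∈ leftPerp 𝒴, R.iStar.obj (R.iUE.obj Y) ∈ 𝒴)
    (h₂ : ∀ Y ∈ 𝒴, R.jLS.obj (R.jUS.obj Y) ∈ 𝒴) :
    WakamatsuTilting (imgCl R.iUE 𝒴) ∧ WakamatsuTilting (imgCl R.jUS 𝒴) :=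
  stmt_2_general R 𝒴 hwt h₁ h₂
end

section
/- Let (𝒜, ℬ, 𝒞) be a recollement of abelian categories, and let 𝒵' and 𝒵'' be contravariantly finite subcategories of 𝒜 and 𝒞, respectively. If i^* and i^! are exact, then 𝒵 = {Z ∈ ℬ | i^*(Z) ∈ 𝒵' and j^*(Z) ∈ 𝒵''} is a contravariantly finite subcategory of ℬ. -/
open CategoryTheory Limits Abelian

universe w₁ w₂ w₃ v₁ v₂ v₃ u₁ u₂ u₃

variable {𝒟 : Type u₁} [Category.{v₁} 𝒟] [Abelian 𝒟]

section Aux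

open CategoryTheory Limits

/-- If the right adjoint is fully faithful, `F.map` of the unit is an isomorphism. -/
lemma aux_isIso_map_unit {C : Type*} {D : Type*} [Category C] [Category D]
    {F : C ⥤ D} {G : D ⥤ C} (h : F ⊣ G) [G.Full] [G.Faithful] (X : C) :
    IsIso (F.map (h.unit.app X)) := by
  haveI : IsIso (𝟙 (F.obj X)) := IsIso.id _
  exact IsIso.of_isIso_fac_right (h.left_triangle_components X)

end Aux

/-- If `𝒵'` and `𝒵''` are contravariantly finite subcategories of `𝒜` and `𝒞`, and
`i^*`, `i^!` are exact, then `𝒵 = {Z ∈ ℬ | i^*(Z) ∈ 𝒵', j^*(Z) ∈ 𝒵''}` is a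
contravariantly finite subcategory of `ℬ`. -/
theorem stmt_5
    {𝒜 : Type u₁} {ℬ : Type u₂} {𝒞 : Type u₃}
    [Category.{v₁} 𝒜] [Category.{v₂} ℬ] [Category.{v₃} 𝒞]
    [Abelian 𝒜] [Abelian ℬ] [Abelian 𝒞]
    [EnoughProjectives 𝒜] [EnoughInjectives 𝒜]
    [EnoughProjectives ℬ] [EnoughInjectives ℬ]
    [EnoughProjectives 𝒞] [EnoughInjectives 𝒞]
    (R : Recollement 𝒜 ℬ 𝒞)
    (𝒵' : Set 𝒜) (𝒵'' : Set 𝒞)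
    (good' : IsGoodSubcat 𝒵') (good'' : IsGoodSubcat 𝒵'')
    (h' : ContravariantlyFinite 𝒵') (h'' : ContravariantlyFinite 𝒵'')
    [PreservesFiniteLimits R.iUS] [PreservesFiniteColimits R.iUS]
    [PreservesFiniteLimits R.iUE] [PreservesFiniteColimits R.iUE] :
    ContravariantlyFinite {Z : ℬ | R.iUS.obj Z ∈ 𝒵' ∧ R.jUS.obj Z ∈ 𝒵''} := by
  haveI := R.iStar_full; haveI := R.iStar_faithful
  haveI := R.jLS_full; haveI := R.jLS_faithful
  haveI : PreservesLimitsOfSize.{0, 0} R.jUS := R.adj₃.rightAdjoint_preservesLimits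
  intro A
  obtain ⟨Z'', a, hZ''mem, ha⟩ := h'' (R.jUS.obj A)
  -- `E` is the pullback of the unit `A ⟶ j_* j^* A` along `j_* a`
  set E : ℬ := pullback (R.adj₄.unit.app A) (R.jLS.map a) with hE
  obtain ⟨Z', b, hZ'mem, hb⟩ := h' (R.iUS.obj E)
  -- `M` is the pullback of the unit `E ⟶ i_* i^* E` along `i_* b`
  set M : ℬ := pullback (R.adj₁.unit.app E) (R.iStar.map b) with hM
  -- `j^*` of any object in the image of `i_*` is zero
  have hz : ∀ X : 𝒜, IsZero (R.jUS.obj (R.iStar.obj X)) := fun X =>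
    (R.essImage_iStar (R.iStar.obj X)).mp (R.iStar.obj_mem_essImage X)
  -- units are mapped to isomorphisms
  haveI : IsIso (R.iUS.map (R.adj₁.unit.app E)) := aux_isIso_map_unit R.adj₁ E
  haveI : IsIso (R.jUS.map (R.adj₄.unit.app A)) := aux_isIso_map_unit R.adj₄ A
  -- `j^*(i_* b)` is a map between zero objects, hence iso
  haveI : IsIso (R.jUS.map (R.iStar.map b)) :=
    isIso_of_source_target_iso_zero _ (hz Z').isoZero (hz (R.iUS.obj E)).isoZero
  -- the isomorphism `i^* M ≅ Z'`
  have e₁ : R.iUS.obj M ≅ Z' :=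
    PreservesPullback.iso R.iUS (R.adj₁.unit.app E) (R.iStar.map b) ≪≫
      asIso (pullback.snd (R.iUS.map (R.adj₁.unit.app E)) (R.iUS.map (R.iStar.map b))) ≪≫
      asIso (R.adj₁.counit.app Z')
  -- the isomorphism `j^* M ≅ j^* E`
  have e₂ : R.jUS.obj M ≅ R.jUS.obj E :=
    PreservesPullback.iso R.jUS (R.adj₁.unit.app E) (R.iStar.map b) ≪≫
      asIso (pullback.fst (R.jUS.map (R.adj₁.unit.app E)) (R.jUS.map (R.iStar.map b)))
  -- the isomorphism `j^* E ≅ Z''`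
  have e₃ : R.jUS.obj E ≅ Z'' :=
    PreservesPullback.iso R.jUS (R.adj₄.unit.app A) (R.jLS.map a) ≪≫
      asIso (pullback.snd (R.jUS.map (R.adj₄.unit.app A)) (R.jUS.map (R.jLS.map a))) ≪≫
      asIso (R.adj₄.counit.app Z'')
  refine ⟨M, pullback.fst _ _ ≫ pullback.fst _ _,
    ⟨good'.1 e₁.symm hZ'mem, good''.1 (e₂ ≪≫ e₃).symm hZ''mem⟩, ?_⟩
  rintro M' ⟨hM'i, hM'j⟩ g
  -- first lift `g` through `E`
  obtain ⟨s, hs⟩ := ha (R.jUS.obj M') hM'j (R.jUS.map g)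
  have w₁ : g ≫ R.adj₄.unit.app A = (R.adj₄.unit.app M' ≫ R.jLS.map s) ≫ R.jLS.map a := by
    rw [Category.assoc, ← R.jLS.map_comp, hs]
    simpa using R.adj₄.unit.naturality g
  set t : M' ⟶ E := pullback.lift g (R.adj₄.unit.app M' ≫ R.jLS.map s) w₁ with ht
  -- then lift `t` through `M`
  obtain ⟨c, hc⟩ := hb (R.iUS.obj M') hM'i (R.iUS.map t)
  have w₂ : t ≫ R.adj₁.unit.app E = (R.adj₁.unit.app M' ≫ R.iStar.map c) ≫ R.iStar.map b := by
    rw [Category.assoc, ← R.iStar.map_comp, hc]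
    simpa using R.adj₁.unit.naturality t
  refine ⟨pullback.lift t (R.adj₁.unit.app M' ≫ R.iStar.map c) w₂, ?_⟩
  rw [← Category.assoc, pullback.lift_fst, ht, pullback.lift_fst]
end

section
/- Let (𝒜, ℬ, 𝒞) be a recollement of abelian categories. If i^* is exact, then i^! j_! = 0, i.e. i^!(j_!(C)) ≅ 0 for every object C of 𝒞; dually, if i^! is exact, then i^* j_* = 0. -/
open CategoryTheory Limits Abelian

universe w₁ w₂ w₃ v₁ v₂ v₃ u₁ u₂ u₃

variable {𝒟 : Type u₁} [Category.{v₁} 𝒟] [Abelian 𝒟]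

/-!
The kernel of the counit `i_* i^! B ⟶ B` is a subobject of an object of `Ker j^* = Im i_*`, hence
itself of the form `i_* A`, and maps out of `i_* A` that die after the counit are zero; so the counit
is a monomorphism. Applying a monomorphism-preserving `i^*` to `i_* i^! j_! X ⟶ j_! X` embeds
`i^* i_* i^! j_! X ≅ i^! j_! X` into `i^* j_! X`, which vanishes by adjunction since
`Hom(j_! X, i_* A) = Hom(X, j^* i_* A) = 0`. The statement about `i^* j_*` is the same one in the
opposite recollement, where `i^*` and `i^!` trade places, as do `j_!` and `j_*`.
-/

namespace CategoryTheory

lemma Functor.op_essImage_iff {C D : Type*} [Category C] [Category D] (F : C ⥤ D) (X : Dᵒᵖ) :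
    F.op.essImage X ↔ F.essImage X.unop :=
  ⟨fun ⟨A, ⟨e⟩⟩ => ⟨A.unop, ⟨e.unop.symm⟩⟩, fun ⟨A, ⟨e⟩⟩ => ⟨Opposite.op A, ⟨e.op.symm⟩⟩⟩

lemma Adjunction.mono_counit_app_of_isClosedUnderSubobjects {C D : Type*} [Category C]
    [Category D] [HasZeroMorphisms C] [Preadditive D] [HasKernels D] {F : C ⥤ D} {G : D ⥤ C}
    (adj : F ⊣ G) [F.Full] [F.PreservesZeroMorphisms] [F.essImage.IsClosedUnderSubobjects]
    (B : D) : Mono (adj.counit.app B) := by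
  obtain ⟨A, ⟨e⟩⟩ :=
    F.essImage.prop_of_mono (kernel.ι (adj.counit.app B)) (F.obj_mem_essImage (G.obj B))
  obtain ⟨φ, hφ⟩ := F.map_surjective (e.hom ≫ kernel.ι _)
  have hφ₀ : φ = 0 := (adj.homEquiv A B).symm.injective (by simp [Adjunction.homEquiv_counit, hφ])
  refine Preadditive.mono_of_kernel_zero ?_
  rw [← cancel_epi e.hom, comp_zero, ← hφ, hφ₀, F.map_zero]

end CategoryTheory

namespace Recollement

variable {𝒜 : Type u₁} {ℬ : Type u₂} {𝒞 : Type u₃}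
    [Category.{v₁} 𝒜] [Category.{v₂} ℬ] [Category.{v₃} 𝒞]
    [Abelian 𝒜] [Abelian ℬ] [Abelian 𝒞] (R : Recollement 𝒜 ℬ 𝒞)

instance : R.iStar.Full := R.iStar_full

instance : R.iStar.Faithful := R.iStar_faithful

abbrev op : Recollement 𝒜ᵒᵖ ℬᵒᵖ 𝒞ᵒᵖ where
  iStar := R.iStar.op
  iUS := R.iUE.op
  iUE := R.iUS.op
  jUS := R.jUS.op
  jLE := R.jLS.op
  jLS := R.jLE.op
  adj₁ := R.adj₂.op
  adj₂ := R.adj₁.op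
  adj₃ := R.adj₄.op
  adj₄ := R.adj₃.op
  iStar_full := inferInstance
  iStar_faithful := inferInstance
  jLE_full := have := R.jLS_full; inferInstance
  jLE_faithful := have := R.jLS_faithful; inferInstance
  jLS_full := have := R.jLE_full; inferInstance
  jLS_faithful := have := R.jLE_faithful; inferInstance
  essImage_iStar X := by
    rw [Functor.op_essImage_iff, R.essImage_iStar]
    exact ⟨IsZero.op, IsZero.unop⟩

instance : R.iStar.essImage.IsClosedUnderSubobjects where
  prop_of_mono f _ hY :=
    (R.essImage_iStar _).2 (((R.essImage_iStar _).1 hY).of_mono (R.jUS.map f))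

lemma isZero_iUS_obj_jLE_obj (X : 𝒞) : IsZero (R.iUS.obj (R.jLE.obj X)) := by
  rw [IsZero.iff_id_eq_zero]
  refine (R.adj₁.homEquiv _ _).injective ((R.adj₃.homEquiv _ _).injective ?_)
  exact ((R.essImage_iStar _).1 (R.iStar.obj_mem_essImage _)).eq_of_tgt _ _

lemma isZero_iUE_obj_jLE_obj [R.iUS.PreservesMonomorphisms] (X : 𝒞) :
    IsZero (R.iUE.obj (R.jLE.obj X)) := by
  have := R.adj₂.mono_counit_app_of_isClosedUnderSubobjects (R.jLE.obj X)
  exact ((R.isZero_iUS_obj_jLE_obj X).of_mono (R.iUS.map (R.adj₂.counit.app _))).of_iso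
    (asIso (R.adj₁.counit.app _)).symm

end Recollement

/-- In a recollement, if `i^*` is exact then `i^! j_! = 0`, and if `i^!` is exact then
`i^* j_* = 0`. -/
theorem stmt_13
    {𝒜 : Type u₁} {ℬ : Type u₂} {𝒞 : Type u₃}
    [Category.{v₁} 𝒜] [Category.{v₂} ℬ] [Category.{v₃} 𝒞]
    [Abelian 𝒜] [Abelian ℬ] [Abelian 𝒞]
    (R : Recollement 𝒜 ℬ 𝒞) :
    (∀ (_ : PreservesFiniteLimits R.iUS) (_ : PreservesFiniteColimits R.iUS) (X : 𝒞),
      IsZero (R.iUE.obj (R.jLE.obj X))) ∧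
    (∀ (_ : PreservesFiniteLimits R.iUE) (_ : PreservesFiniteColimits R.iUE) (X : 𝒞),
      IsZero (R.iUS.obj (R.jLS.obj X))) := by
  refine ⟨fun _ _ X => R.isZero_iUE_obj_jLE_obj X, fun _ _ X => ?_⟩
  have := preservesFiniteLimits_op R.iUE
  exact (R.op.isZero_iUE_obj_jLE_obj (Opposite.op X)).unop
end

section
/- Let (𝒜, ℬ, 𝒞) be a recollement of abelian categories. If i^* is exact, then for every object B of ℬ there is a short exact sequence 0 → j_! j^*(B) → B → i_* i^*(B) → 0, where the maps are the counit of (j_!, j^*) and the unit of (i^*, i_*). -/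
open CategoryTheory Limits Abelian

universe w₁ w₂ w₃ v₁ v₂ v₃ u₁ u₂ u₃

variable {𝒟 : Type u₁} [Category.{v₁} 𝒟] [Abelian 𝒟]

section RecollementAux

variable {𝒜 : Type u₁} {ℬ : Type u₂} {𝒞 : Type u₃}
    [Category.{v₁} 𝒜] [Category.{v₂} ℬ] [Category.{v₃} 𝒞]
    [Abelian 𝒜] [Abelian ℬ] [Abelian 𝒞] (R : Recollement 𝒜 ℬ 𝒞)

/-- Any morphism `j_! C ⟶ i_* A` is zero. -/
lemma Recollement.hom_jLE_iStar_zero {C : 𝒞} {A : 𝒜}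
    (f : R.jLE.obj C ⟶ R.iStar.obj A) : f = 0 := by
  haveI := R.adj₃.isLeftAdjoint
  have hz : IsZero (R.jUS.obj (R.iStar.obj A)) :=
    (R.essImage_iStar _).1 ⟨A, ⟨Iso.refl _⟩⟩
  have h0 : (R.adj₃.homEquiv _ _) f = 0 := hz.eq_of_tgt _ _
  have h1 := congrArg (R.adj₃.homEquiv _ _).symm h0
  rwa [Equiv.symm_apply_apply, Adjunction.homEquiv_counit, Functor.map_zero,
    zero_comp] at h1

/-- `i^* j_! = 0`. -/
lemma Recollement.isZero_iUS_jLE (C : 𝒞) : IsZero (R.iUS.obj (R.jLE.obj C)) := by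
  haveI := R.adj₁.isLeftAdjoint
  rw [IsZero.iff_id_eq_zero]
  have h0 : (R.adj₁.homEquiv _ _) (𝟙 (R.iUS.obj (R.jLE.obj C))) = 0 :=
    R.hom_jLE_iStar_zero _
  have h1 := congrArg (R.adj₁.homEquiv _ _).symm h0
  rwa [Equiv.symm_apply_apply, Adjunction.homEquiv_counit, Functor.map_zero,
    zero_comp] at h1

/-- If both `i^* X` and `j^* X` vanish then `X` vanishes. -/
lemma Recollement.isZero_of_isZero_iUS_jUS {X : ℬ}
    (h1 : IsZero (R.iUS.obj X)) (h2 : IsZero (R.jUS.obj X)) : IsZero X := by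
  haveI := R.iStar_full
  haveI := R.iStar_faithful
  haveI := R.adj₁.isRightAdjoint
  obtain ⟨A, ⟨e⟩⟩ := (R.essImage_iStar X).2 h2
  have hA : IsZero A := by
    have h3 : IsZero (R.iUS.obj (R.iStar.obj A)) := h1.of_iso (R.iUS.mapIso e)
    exact h3.of_iso (asIso (R.adj₁.counit.app A)).symm
  exact (R.iStar.map_isZero hA).of_iso e.symm

end RecollementAux

/-- In a recollement, if `i^*` is exact then for every `B` in `ℬ` the sequence
`0 ⟶ j_! j^*(B) ⟶ B ⟶ i_* i^*(B) ⟶ 0` (counit of `(j_!, j^*)` followed by unit of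
`(i^*, i_*)`) is short exact. -/
theorem stmt_16
    {𝒜 : Type u₁} {ℬ : Type u₂} {𝒞 : Type u₃}
    [Category.{v₁} 𝒜] [Category.{v₂} ℬ] [Category.{v₃} 𝒞]
    [Abelian 𝒜] [Abelian ℬ] [Abelian 𝒞]
    (R : Recollement 𝒜 ℬ 𝒞)
    [PreservesFiniteLimits R.iUS] [PreservesFiniteColimits R.iUS] :
    ∀ B : ℬ, Mono (R.adj₃.counit.app B) ∧ Epi (R.adj₁.unit.app B) ∧
      ExactAt (R.adj₃.counit.app B) (R.adj₁.unit.app B) := by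
  intro B
  haveI := R.iStar_full
  haveI := R.iStar_faithful
  haveI := R.jLE_full
  haveI := R.jLE_faithful
  haveI := R.adj₁.isLeftAdjoint
  haveI := R.adj₁.isRightAdjoint
  haveI := R.adj₃.isLeftAdjoint
  haveI := R.adj₃.isRightAdjoint
  haveI := R.adj₄.isLeftAdjoint
  haveI : PreservesLimitsOfSize.{0, 0} R.jUS := R.adj₃.rightAdjoint_preservesLimits
  haveI : PreservesColimitsOfSize.{0, 0} R.jUS := R.adj₄.leftAdjoint_preservesColimits
  set ε := R.adj₃.counit.app B with hε
  set η := R.adj₁.unit.app B with hη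
  -- composition is zero
  have w : ε ≫ η = 0 := R.hom_jLE_iStar_zero _
  -- `j^* (i_* i^* B)` is zero
  have hz1 : IsZero (R.jUS.obj (R.iStar.obj (R.iUS.obj B))) :=
    (R.essImage_iStar _).1 ⟨_, ⟨Iso.refl _⟩⟩
  -- `i^* (j_! j^* B)` is zero
  have hz2 : IsZero (R.iUS.obj (R.jLE.obj (R.jUS.obj B))) := R.isZero_iUS_jLE _
  -- `i^* η` is an isomorphism
  have h1 : IsIso (R.iUS.map η) := by
    haveI : IsIso (𝟙 (R.iUS.obj B)) := inferInstance
    have h : R.iUS.map η ≫ R.adj₁.counit.app (R.iUS.obj B) = 𝟙 (R.iUS.obj B) :=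
      R.adj₁.left_triangle_components B
    exact IsIso.of_isIso_fac_right h
  -- `j^* ε` is an isomorphism
  have h2 : IsIso (R.jUS.map ε) := by
    haveI : IsIso (𝟙 (R.jUS.obj B)) := inferInstance
    have h : R.adj₃.unit.app (R.jUS.obj B) ≫ R.jUS.map ε = 𝟙 (R.jUS.obj B) :=
      R.adj₃.right_triangle_components B
    exact IsIso.of_isIso_fac_left h
  -- Mono ε
  have hmono : Mono ε := by
    apply Preadditive.mono_of_isZero_kernel
    apply R.isZero_of_isZero_iUS_jUS
    · have e : R.iUS.obj (kernel ε) ≅ kernel (R.iUS.map ε) :=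
        PreservesKernel.iso R.iUS ε
      have hk : kernel.ι (R.iUS.map ε) = 0 := hz2.eq_of_tgt _ _
      exact (IsZero.of_mono_eq_zero _ hk).of_iso e
    · have e : R.jUS.obj (kernel ε) ≅ kernel (R.jUS.map ε) :=
        PreservesKernel.iso R.jUS ε
      haveI := h2
      exact (isZero_zero _).of_iso (e ≪≫ kernel.ofMono _)
  -- Epi η
  have hepi : Epi η := by
    apply Preadditive.epi_of_isZero_cokernel
    apply R.isZero_of_isZero_iUS_jUS
    · have e : R.iUS.obj (cokernel η) ≅ cokernel (R.iUS.map η) :=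
        PreservesCokernel.iso R.iUS η
      haveI := h1
      exact (isZero_zero _).of_iso (e ≪≫ cokernel.ofEpi _)
    · have e : R.jUS.obj (cokernel η) ≅ cokernel (R.jUS.map η) :=
        PreservesCokernel.iso R.jUS η
      have hk : cokernel.π (R.jUS.map η) = 0 := hz1.eq_of_src _ _
      exact (IsZero.of_epi_eq_zero _ hk).of_iso e
  -- Exactness
  refine ⟨hmono, hepi, w, ?_⟩
  set S := ShortComplex.mk ε η w with hS
  rw [ShortComplex.exact_iff_isZero_homology]
  apply R.isZero_of_isZero_iUS_jUS
  · have hex : (S.map R.iUS).Exact :=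
      (ShortComplex.Splitting.ofIsZeroOfIsIso _ hz2 h1).exact
    have := (ShortComplex.exact_iff_isZero_homology _).1 hex
    exact this.of_iso (S.mapHomologyIso R.iUS).symm
  · have hex : (S.map R.jUS).Exact :=
      (ShortComplex.Splitting.ofIsIsoOfIsZero _ h2 hz1).exact
    have := (ShortComplex.exact_iff_isZero_homology _).1 hex
    exact this.of_iso (S.mapHomologyIso R.jUS).symm
end

section
/- Let (𝒜, ℬ, 𝒞) be a recollement of abelian categories. If i^! is exact, then for every object B of ℬ there is a short exact sequence 0 → i_* i^!(B) → B → j_* j^*(B) → 0, where the maps are the counit of (i_*, i^!) and the unit of (j^*, j_*). -/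
open CategoryTheory Limits Abelian

universe w₁ w₂ w₃ v₁ v₂ v₃ u₁ u₂ u₃

variable {𝒟 : Type u₁} [Category.{v₁} 𝒟] [Abelian 𝒟]

section RecollementAux

variable {𝒜 : Type u₁} {ℬ : Type u₂} {𝒞 : Type u₃}
    [Category.{v₁} 𝒜] [Category.{v₂} ℬ] [Category.{v₃} 𝒞]
    [Abelian 𝒜] [Abelian ℬ] [Abelian 𝒞] (R : Recollement 𝒜 ℬ 𝒞)

/-- `j^* i_* = 0`. -/
lemma Recollement.jUS_iStar_isZero (X : 𝒜) : IsZero (R.jUS.obj (R.iStar.obj X)) :=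
  (R.essImage_iStar _).mp ⟨X, ⟨Iso.refl _⟩⟩

/-- `i^! j_* = 0`. -/
lemma Recollement.iUE_jLS_isZero (Y : 𝒞) : IsZero (R.iUE.obj (R.jLS.obj Y)) := by
  rw [IsZero.iff_id_eq_zero]
  apply (R.adj₂.homEquiv _ _).symm.injective
  apply (R.adj₄.homEquiv _ _).symm.injective
  exact (R.jUS_iStar_isZero _).eq_of_src _ _

/-- An object killed by both `j^*` and `i^!` is zero. -/
lemma Recollement.isZero_of_jUS_iUE {X : ℬ} (h1 : IsZero (R.jUS.obj X))
    (h2 : IsZero (R.iUE.obj X)) : IsZero X := by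
  obtain ⟨A, ⟨e⟩⟩ := (R.essImage_iStar X).mpr h1
  haveI := R.iStar_full
  haveI := R.iStar_faithful
  have hA : IsZero A :=
    (h2.of_iso (R.iUE.mapIso e)).of_iso (asIso (R.adj₂.unit.app A))
  haveI := R.adj₁.isRightAdjoint
  exact (R.iStar.map_isZero hA).of_iso e.symm

end RecollementAux

/-- In a recollement, if `i^!` is exact then for every `B` in `ℬ` the sequence
`0 ⟶ i_* i^!(B) ⟶ B ⟶ j_* j^*(B) ⟶ 0` (counit of `(i_*, i^!)` followed by unit of
`(j^*, j_*)`) is short exact. -/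
theorem stmt_17
    {𝒜 : Type u₁} {ℬ : Type u₂} {𝒞 : Type u₃}
    [Category.{v₁} 𝒜] [Category.{v₂} ℬ] [Category.{v₃} 𝒞]
    [Abelian 𝒜] [Abelian ℬ] [Abelian 𝒞]
    (R : Recollement 𝒜 ℬ 𝒞)
    [PreservesFiniteLimits R.iUE] [PreservesFiniteColimits R.iUE] :
    ∀ B : ℬ, Mono (R.adj₂.counit.app B) ∧ Epi (R.adj₄.unit.app B) ∧
      ExactAt (R.adj₂.counit.app B) (R.adj₄.unit.app B) := by
  haveI := R.iStar_full
  haveI := R.iStar_faithful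
  haveI := R.jLS_full
  haveI := R.jLS_faithful
  haveI := R.adj₁.isRightAdjoint
  haveI := R.adj₂.isRightAdjoint
  haveI := R.adj₃.isRightAdjoint
  haveI := R.adj₄.isLeftAdjoint
  intro B
  -- `i^!(ε)` is an isomorphism
  haveI hiso₁ : IsIso (R.iUE.map (R.adj₂.counit.app B)) := by
    have h := R.adj₂.right_triangle_components B
    haveI : IsIso (R.adj₂.unit.app (R.iUE.obj B) ≫ R.iUE.map (R.adj₂.counit.app B)) := by
      rw [h]; exact IsIso.id _
    exact IsIso.of_isIso_comp_left (R.adj₂.unit.app (R.iUE.obj B))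
      (R.iUE.map (R.adj₂.counit.app B))
  -- `j^*(η)` is an isomorphism
  haveI hiso₂ : IsIso (R.jUS.map (R.adj₄.unit.app B)) := by
    have h := R.adj₄.left_triangle_components B
    haveI : IsIso (R.jUS.map (R.adj₄.unit.app B) ≫ R.adj₄.counit.app (R.jUS.obj B)) := by
      rw [h]; exact IsIso.id _
    exact IsIso.of_isIso_comp_right (R.jUS.map (R.adj₄.unit.app B))
      (R.adj₄.counit.app (R.jUS.obj B))
  -- the composition vanishes
  have w : R.adj₂.counit.app B ≫ R.adj₄.unit.app B = 0 := by
    apply (R.adj₄.homEquiv _ _).symm.injective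
    exact (R.jUS_iStar_isZero _).eq_of_src _ _
  -- Mono ε
  have hmono : Mono (R.adj₂.counit.app B) := by
    apply Preadditive.mono_of_isZero_kernel
    apply R.isZero_of_jUS_iUE
    · refine IsZero.of_mono_eq_zero (R.jUS.map (kernel.ι (R.adj₂.counit.app B))) ?_
      exact (R.jUS_iStar_isZero _).eq_of_tgt _ _
    · refine IsZero.of_mono_eq_zero (R.iUE.map (kernel.ι (R.adj₂.counit.app B))) ?_
      refine zero_of_comp_mono (R.iUE.map (R.adj₂.counit.app B)) ?_
      rw [← R.iUE.map_comp, kernel.condition, R.iUE.map_zero]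
  -- Epi η
  have hepi : Epi (R.adj₄.unit.app B) := by
    apply Preadditive.epi_of_isZero_cokernel
    apply R.isZero_of_jUS_iUE
    · refine IsZero.of_epi_eq_zero (R.jUS.map (cokernel.π (R.adj₄.unit.app B))) ?_
      refine zero_of_epi_comp (R.jUS.map (R.adj₄.unit.app B)) ?_
      rw [← R.jUS.map_comp, cokernel.condition, R.jUS.map_zero]
    · refine IsZero.of_epi_eq_zero (R.iUE.map (cokernel.π (R.adj₄.unit.app B))) ?_
      exact (R.iUE_jLS_isZero _).eq_of_src _ _
  refine ⟨hmono, hepi, w, ?_⟩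
  -- exactness in the middle
  rw [ShortComplex.exact_iff_epi_kernel_lift]
  have hzK : IsZero (R.jUS.obj (kernel (R.adj₄.unit.app B))) := by
    refine IsZero.of_mono_eq_zero (R.jUS.map (kernel.ι (R.adj₄.unit.app B))) ?_
    refine zero_of_comp_mono (R.jUS.map (R.adj₄.unit.app B)) ?_
    rw [← R.jUS.map_comp, kernel.condition, R.jUS.map_zero]
  obtain ⟨A, ⟨e⟩⟩ := (R.essImage_iStar (kernel (R.adj₄.unit.app B))).mpr hzK
  have hf : R.iStar.map (R.adj₂.homEquiv A B (e.hom ≫ kernel.ι (R.adj₄.unit.app B))) ≫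
      R.adj₂.counit.app B = e.hom ≫ kernel.ι (R.adj₄.unit.app B) := by
    have h2 := R.adj₂.homEquiv_counit (X := A) (Y := B)
      (g := R.adj₂.homEquiv A B (e.hom ≫ kernel.ι (R.adj₄.unit.app B)))
    rw [Equiv.symm_apply_apply] at h2
    rw [← h2]
  have hsec : (e.inv ≫ R.iStar.map (R.adj₂.homEquiv A B
        (e.hom ≫ kernel.ι (R.adj₄.unit.app B)))) ≫
      kernel.lift (R.adj₄.unit.app B) (R.adj₂.counit.app B) w =
      𝟙 (kernel (R.adj₄.unit.app B)) := by
    rw [← cancel_mono (kernel.ι (R.adj₄.unit.app B))]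
    simp only [Category.assoc, kernel.lift_ι, Category.id_comp]
    rw [hf, Iso.inv_hom_id_assoc]
  haveI : IsSplitEpi (kernel.lift (R.adj₄.unit.app B) (R.adj₂.counit.app B) w) :=
    IsSplitEpi.mk' ⟨_, hsec⟩
  infer_instance
end
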